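/- Let A ∈ ℂ^{p×m}, B ∈ ℂ^{n×q}, C ∈ ℂ^{p×q} with A A† C B† B = C. Then E₀ = A† C B† solves A E₀ B = C, and for every other solution E of AEB = C one has ‖E₀‖₂ ≤ ‖E‖₂ (spectral norm minimality of the pseudoinverse solution). -/

import Mathlib

open Matrix

noncomputable section

/-- `Ad` is the Moore–Penrose pseudoinverse of the complex matrix `A`. -/
def IsMoorePenrose {m n : Type*} [Fintype m] [Fintype n]
    (A : Matrix m n ℂ) (Ad : Matrix n m ℂ) : Prop :=
  A * Ad * A = A ∧ Ad * A * Ad = Ad ∧ (A * Ad).IsHermitian ∧ (Ad * A).IsHermitian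

/-- The l2 norm of a complex vector. -/
def vecL2Norm {k : ℕ} (v : Fin k → ℂ) : ℝ := Real.sqrt (∑ i, Complex.normSq (v i))

/-- Spectral (operator 2-) norm of a complex matrix. -/
def specNorm {m n : ℕ} (A : Matrix (Fin m) (Fin n) ℂ) : ℝ :=
  sSup {c : ℝ | ∃ x : Fin n → ℂ, vecL2Norm x ≤ 1 ∧ c = vecL2Norm (A.mulVec x)}

lemma vecL2Norm_eq {k : ℕ} (v : Fin k → ℂ) :
    vecL2Norm v = ‖(WithLp.equiv 2 (Fin k → ℂ)).symm v‖ := by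
  rw [EuclideanSpace.norm_eq, vecL2Norm]
  congr 1
  refine Finset.sum_congr rfl fun i _ => ?_
  simp [Complex.normSq_eq_norm_sq]

lemma inner_eq_dot {k : ℕ} (x y : Fin k → ℂ) :
    (inner ℂ ((WithLp.equiv 2 (Fin k → ℂ)).symm x) ((WithLp.equiv 2 (Fin k → ℂ)).symm y) : ℂ)
      = star x ⬝ᵥ y := by
  simp [PiLp.inner_apply, dotProduct, RCLike.inner_apply, mul_comm]

lemma proj_vecL2Norm_le {k : ℕ} (P : Matrix (Fin k) (Fin k) ℂ)
    (hP : P.IsHermitian) (hPP : P * P = P) (x : Fin k → ℂ) :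
    vecL2Norm (P.mulVec x) ≤ vecL2Norm x := by
  set u := P.mulVec x with hu
  have hdot : star u ⬝ᵥ u = star x ⬝ᵥ u := by
    rw [hu, Matrix.star_mulVec, hP.eq, ← Matrix.dotProduct_mulVec,
      Matrix.mulVec_mulVec, hPP]
  have h1 : ‖(WithLp.equiv 2 (Fin k → ℂ)).symm u‖ ^ 2
      = Complex.re (inner ℂ ((WithLp.equiv 2 (Fin k → ℂ)).symm x)
          ((WithLp.equiv 2 (Fin k → ℂ)).symm u)) := by
    rw [← @inner_self_eq_norm_sq ℂ, inner_eq_dot, inner_eq_dot, hdot]; rfl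
  have h2 : Complex.re (inner ℂ ((WithLp.equiv 2 (Fin k → ℂ)).symm x)
      ((WithLp.equiv 2 (Fin k → ℂ)).symm u) : ℂ)
      ≤ ‖(WithLp.equiv 2 (Fin k → ℂ)).symm x‖ * ‖(WithLp.equiv 2 (Fin k → ℂ)).symm u‖ := by
    refine le_trans (Complex.re_le_norm _) ?_
    exact norm_inner_le_norm _ _
  rw [vecL2Norm_eq, vecL2Norm_eq]
  have ha : (0:ℝ) ≤ ‖(WithLp.equiv 2 (Fin k → ℂ)).symm u‖ := norm_nonneg _
  have hb : (0:ℝ) ≤ ‖(WithLp.equiv 2 (Fin k → ℂ)).symm x‖ := norm_nonneg _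
  nlinarith [h1, h2]

lemma mulVec_vecL2Norm_bound {a b : ℕ} (M : Matrix (Fin a) (Fin b) ℂ) :
    ∃ K : ℝ, 0 ≤ K ∧ ∀ x, vecL2Norm (M.mulVec x) ≤ K * vecL2Norm x := by
  set f := (Matrix.toEuclideanLin M).toContinuousLinearMap with hf
  refine ⟨‖f‖, norm_nonneg _, fun x => ?_⟩
  have : vecL2Norm (M.mulVec x) = ‖f ((WithLp.equiv 2 (Fin b → ℂ)).symm x)‖ := by
    rw [vecL2Norm_eq]
    congr 1
  rw [this, vecL2Norm_eq]
  exact f.le_opNorm _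

/-- E₀ = A† C B† solves AEB = C and has minimal spectral norm
among all solutions. -/
theorem pseudoinverse_solution_specNorm_minimal {p m n q : ℕ}
    (A : Matrix (Fin p) (Fin m) ℂ) (Ad : Matrix (Fin m) (Fin p) ℂ)
    (B : Matrix (Fin n) (Fin q) ℂ) (Bd : Matrix (Fin q) (Fin n) ℂ)
    (C : Matrix (Fin p) (Fin q) ℂ)
    (hA : IsMoorePenrose A Ad) (hB : IsMoorePenrose B Bd)
    (hcond : A * Ad * C * Bd * B = C) :
    A * (Ad * C * Bd) * B = C ∧
    ∀ E : Matrix (Fin m) (Fin n) ℂ, A * E * B = C →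
      specNorm (Ad * C * Bd) ≤ specNorm E := by
  obtain ⟨hA1, hA2, hA3, hA4⟩ := hA
  obtain ⟨hB1, hB2, hB3, hB4⟩ := hB
  have hpart1 : A * (Ad * C * Bd) * B = C := by
    simp only [Matrix.mul_assoc] at hcond ⊢; exact hcond
  refine ⟨hpart1, fun E hE => ?_⟩
  have hPA : (Ad * A).IsHermitian := hA4
  have hPAidem : (Ad * A) * (Ad * A) = Ad * A := by
    calc (Ad * A) * (Ad * A) = Ad * (A * Ad * A) := by simp only [Matrix.mul_assoc]
    _ = Ad * A := by rw [hA1]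
  have hPB : (B * Bd).IsHermitian := hB3
  have hPBidem : (B * Bd) * (B * Bd) = B * Bd := by
    calc (B * Bd) * (B * Bd) = (B * Bd * B) * Bd := by simp only [Matrix.mul_assoc]
    _ = B * Bd := by rw [hB1]
  have hkey : Ad * C * Bd = (Ad * A) * (E * (B * Bd)) := by
    rw [← hE]; simp only [Matrix.mul_assoc]
  obtain ⟨K, hK0, hK⟩ := mulVec_vecL2Norm_bound E
  set S := {c : ℝ | ∃ x : Fin n → ℂ, vecL2Norm x ≤ 1 ∧ c = vecL2Norm (E.mulVec x)} with hS
  have hbdd : BddAbove S := by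
    refine ⟨K, fun c hc => ?_⟩
    obtain ⟨x, hx, rfl⟩ := hc
    calc vecL2Norm (E.mulVec x) ≤ K * vecL2Norm x := hK x
    _ ≤ K * 1 := by
        apply mul_le_mul_of_nonneg_left hx hK0
    _ = K := mul_one K
  have hmem0 : (0:ℝ) ∈ S := by
    refine ⟨0, ?_, ?_⟩
    · simp [vecL2Norm]
    · simp [vecL2Norm, Matrix.mulVec_zero]
  have hsSup0 : (0:ℝ) ≤ sSup S := le_csSup hbdd hmem0
  refine Real.sSup_le (fun c hc => ?_) hsSup0
  obtain ⟨x, hx, rfl⟩ := hc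
  set y := (B * Bd).mulVec x with hy
  have hyle : vecL2Norm y ≤ 1 := le_trans (proj_vecL2Norm_le _ hPB hPBidem x) hx
  have heq : (Ad * C * Bd).mulVec x = (Ad * A).mulVec (E.mulVec y) := by
    rw [hkey]; simp only [hy, Matrix.mulVec_mulVec, Matrix.mul_assoc]
  calc vecL2Norm ((Ad * C * Bd).mulVec x)
      = vecL2Norm ((Ad * A).mulVec (E.mulVec y)) := by rw [heq]
    _ ≤ vecL2Norm (E.mulVec y) := proj_vecL2Norm_le _ hPA hPAidem _
    _ ≤ sSup S := le_csSup hbdd ⟨y, hyle, rfl⟩
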